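/- arXiv:2107.11953 — 3 statements merged into one kernel-verified Lean document; each statement's English description precedes it below -/
import Mathlib

section
/- Let ρ be a Borel probability measure on ℝ with finite first moment. Then the logarithmic energy L(ρ) = ∬ -log|s - t| dρ(s) dρ(t) (valued in ℝ ∪ {+∞}) satisfies L(ρ) ≥ -√(2 ∫|s| dρ(s)). -/
/-!
The negative part of `-log |s - t|` is `log⁺ |s - t| ≤ √|s - t| ≤ √(|s| + |t|)`. By Jensen's
inequality for the concave square root, its `ρ ⊗ ρ`-integral is at most
`√(∫ (|s| + |t|) d(ρ ⊗ ρ)) = √(2 ∫ |s| dρ)`, so the negative part of `L(ρ)` is finite and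
bounded by this quantity.
-/

open MeasureTheory ENNReal

/-- Extended-real-valued integral: +∞ allowed, defined when the negative part is finite. -/
noncomputable def eInt {α : Type*} [MeasurableSpace α] (μ : Measure α) (f : α → ℝ) : EReal :=
  ((∫⁻ a, ENNReal.ofReal (f a) ∂μ : ℝ≥0∞) : EReal) -
    ((∫⁻ a, ENNReal.ofReal (-f a) ∂μ : ℝ≥0∞) : EReal)

/-- The logarithmic energy, valued in ℝ ∪ {+∞}. -/
noncomputable def logEnergy (ρ : Measure ℝ) : EReal :=
  eInt (ρ.prod ρ) (fun p => -Real.log |p.1 - p.2|)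

namespace Real

lemma log_le_half_self {y : ℝ} (hy : 0 < y) : log y ≤ y / 2 := by
  have hlog2 := log_two_lt_d9
  have h := log_le_sub_one_of_pos (half_pos hy)
  rw [log_div hy.ne' two_ne_zero] at h
  norm_num at hlog2
  linarith

lemma log_le_sqrt {w : ℝ} (hw : 0 ≤ w) : log w ≤ √w := by
  rcases hw.eq_or_lt with rfl | hw
  · simp
  · have h := log_le_half_self (sqrt_pos.2 hw)
    rw [log_sqrt hw.le] at h
    linarith

end Real

lemma MeasureTheory.lintegral_rpow_le_rpow_lintegral {α : Type*} [MeasurableSpace α]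
    {μ : Measure α} [IsProbabilityMeasure μ] {f : α → ℝ≥0∞} (hf : AEMeasurable f μ)
    {p : ℝ} (hp0 : 0 < p) (hp1 : p ≤ 1) :
    ∫⁻ a, f a ^ p ∂μ ≤ (∫⁻ a, f a ∂μ) ^ p := by
  -- Jensen for `x ↦ x ^ p`, read off from `‖f ^ p‖₁ ≤ ‖f ^ p‖_{1/p}` on a probability space.
  have hexp : (1 : ℝ≥0∞) ≤ ENNReal.ofReal p⁻¹ := by
    rw [← ENNReal.ofReal_one]; exact ENNReal.ofReal_le_ofReal ((one_le_inv₀ hp0).2 hp1)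
  have h := eLpNorm_le_eLpNorm_of_exponent_le hexp (hf.pow_const p).aestronglyMeasurable
  rw [eLpNorm_one_eq_lintegral_enorm, eLpNorm_eq_lintegral_rpow_enorm_toReal
    (by simpa using hp0) ENNReal.ofReal_ne_top] at h
  simpa only [enorm_eq_self, ← ENNReal.rpow_mul, ENNReal.toReal_ofReal (inv_nonneg.2 hp0.le),
    mul_inv_cancel₀ hp0.ne', ENNReal.rpow_one, one_div, inv_inv] using h

lemma MeasureTheory.lintegral_add_fst_snd {α β : Type*} [MeasurableSpace α] [MeasurableSpace β]
    {μ : Measure α} {ν : Measure β} [IsProbabilityMeasure μ] [IsProbabilityMeasure ν]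
    {f : α → ℝ≥0∞} {g : β → ℝ≥0∞} (hf : Measurable f) (hg : Measurable g) :
    ∫⁻ p, f p.1 + g p.2 ∂μ.prod ν = ∫⁻ a, f a ∂μ + ∫⁻ b, g b ∂ν := by
  rw [lintegral_add_left (f := fun p : α × β => f p.1) (by fun_prop),
    measurePreserving_fst.lintegral_comp hf, measurePreserving_snd.lintegral_comp hg]

lemma neg_le_eInt_of_lintegral_negPart_le {α : Type*} [MeasurableSpace α] {μ : Measure α}
    {f : α → ℝ} {c : ℝ} (hc : 0 ≤ c) (h : ∫⁻ a, ENNReal.ofReal (-f a) ∂μ ≤ ENNReal.ofReal c) :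
    ((-c : ℝ) : EReal) ≤ eInt μ f := by
  calc ((-c : ℝ) : EReal) = 0 - ((ENNReal.ofReal c : ℝ≥0∞) : EReal) := by
        rw [EReal.coe_ennreal_ofReal, max_eq_left hc, zero_sub, EReal.coe_neg]
    _ ≤ eInt μ f :=
        EReal.sub_le_sub (EReal.coe_ennreal_nonneg _) (EReal.coe_ennreal_le_coe_ennreal_iff.2 h)

lemma ofReal_log_abs_sub_le (s t : ℝ) :
    ENNReal.ofReal (Real.log |s - t|) ≤
      (ENNReal.ofReal |s| + ENNReal.ofReal |t|) ^ (1 / 2 : ℝ) := by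
  rw [← ENNReal.ofReal_add (abs_nonneg s) (abs_nonneg t),
    ENNReal.ofReal_rpow_of_nonneg (by positivity) (by norm_num), ← Real.sqrt_eq_rpow]
  refine ENNReal.ofReal_le_ofReal ?_
  calc Real.log |s - t| ≤ √|s - t| := Real.log_le_sqrt (abs_nonneg _)
    _ ≤ √(|s| + |t|) := Real.sqrt_le_sqrt (abs_sub _ _)

theorem stmt_7 (ρ : Measure ℝ) [IsProbabilityMeasure ρ]
    (hmom : Integrable (fun x => |x|) ρ) :
    ((-Real.sqrt (2 * ∫ s, |s| ∂ρ) : ℝ) : EReal) ≤ logEnergy ρ := by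
  set M := ∫ s, |s| ∂ρ
  have hM : 0 ≤ M := integral_nonneg fun s => abs_nonneg s
  have hlintegral_abs : ∫⁻ s, ENNReal.ofReal |s| ∂ρ = ENNReal.ofReal M :=
    (ofReal_integral_eq_lintegral_ofReal hmom (ae_of_all _ fun s => abs_nonneg s)).symm
  have habs : Measurable fun s : ℝ => ENNReal.ofReal |s| := measurable_abs.ennreal_ofReal
  refine neg_le_eInt_of_lintegral_negPart_le (Real.sqrt_nonneg _) ?_
  calc ∫⁻ p : ℝ × ℝ, ENNReal.ofReal (- -Real.log |p.1 - p.2|) ∂ρ.prod ρ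
      ≤ ∫⁻ p : ℝ × ℝ, (ENNReal.ofReal |p.1| + ENNReal.ofReal |p.2|) ^ (1 / 2 : ℝ) ∂ρ.prod ρ :=
        lintegral_mono fun p => by simpa only [neg_neg] using ofReal_log_abs_sub_le p.1 p.2
    _ ≤ (∫⁻ p : ℝ × ℝ, ENNReal.ofReal |p.1| + ENNReal.ofReal |p.2| ∂ρ.prod ρ) ^ (1 / 2 : ℝ) :=
        lintegral_rpow_le_rpow_lintegral (by fun_prop) (by norm_num) (by norm_num)
    _ = ENNReal.ofReal √(2 * M) := by
        rw [lintegral_add_fst_snd habs habs, hlintegral_abs, ← ENNReal.ofReal_add hM hM,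
          ENNReal.ofReal_rpow_of_nonneg (by positivity) (by norm_num), ← Real.sqrt_eq_rpow, two_mul]
end

section
/- Let σ be the standard semicircle measure on ℝ, with density (1/(2π))√(4 - x²) on [-2, 2]. Then for every polynomial p with real coefficients, ∬ (p(s) - p(t))/(s - t) dσ(s) dσ(t) = ∫ s·p(s) dσ(s), where the integrand on the left is interpreted as the divided difference of p (equal to p'(s) when s = t). -/
open MeasureTheory Polynomial

/-- The standard semicircle measure, with density (1/(2π))√(4-x²) on [-2,2]. -/
noncomputable def semicircle : Measure ℝ :=
  (volume.restrict (Set.Icc (-2 : ℝ) 2)).withDensity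
    (fun x => ENNReal.ofReal (1 / (2 * Real.pi) * Real.sqrt (4 - x ^ 2)))

/-- The divided difference of a polynomial, equal to p' on the diagonal. -/
noncomputable def dividedDiff (p : Polynomial ℝ) (s t : ℝ) : ℝ :=
  if s = t then (Polynomial.derivative p).eval s else (p.eval s - p.eval t) / (s - t)

/-!
Both sides are linear in `p`, and for `p = X ^ n` they only involve the moments
`m k = ∫ x ^ k dσ`: the left side is `∑_{i < n} m i * m (n - 1 - i)`, the right side `m (n + 1)`.
Differentiating `x ^ (n + 1) * (4 - x ^ 2) ^ (3 / 2)` gives the recurrence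
`(n + 4) m (n + 2) = 4 (n + 1) m n`, so the moments are the aerated Catalan numbers
(`m (2 k) = catalan k`, odd moments vanish), and the identity becomes Segner's recursion
`catalan (k + 1) = ∑_{i + j = k} catalan i * catalan j`.
-/

open Finset Real

theorem add_two_mul_catalan_succ (k : ℕ) :
    (k + 2) * catalan (k + 1) = 2 * (2 * k + 1) * catalan k := by
  have h := Nat.succ_mul_centralBinom_succ k
  rw [← succ_mul_catalan_eq_centralBinom, ← succ_mul_catalan_eq_centralBinom] at h
  refine Nat.eq_of_mul_eq_mul_left k.succ_pos ?_
  ring_nf at h ⊢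
  linarith

section AeratedCatalan

variable {R : Type*} [Semiring R] {a : ℕ → R}

theorem sum_antidiagonal_mul_eq_of_catalan (heven : ∀ k, a (2 * k) = catalan k)
    (hodd : ∀ n, Odd n → a n = 0) (n : ℕ) :
    ∑ ij ∈ antidiagonal n, a ij.1 * a ij.2 = a (n + 2) := by
  rcases Nat.even_or_odd n with ⟨k, rfl⟩ | hn
  · set double : ℕ × ℕ → ℕ × ℕ := fun ij => (2 * ij.1, 2 * ij.2)
    have hinj : Set.InjOn double (antidiagonal k) := fun ij _ ij' _ h => by
      simpa [double, Prod.ext_iff] using h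
    have hsub : (antidiagonal k).image double ⊆ antidiagonal (k + k) := by
      intro _ hm
      obtain ⟨⟨u, v⟩, huv, rfl⟩ := mem_image.1 hm
      rw [HasAntidiagonal.mem_antidiagonal] at huv ⊢
      simp only [double]
      omega
    have hzero : ∀ ij ∈ antidiagonal (k + k), ij ∉ (antidiagonal k).image double →
        a ij.1 * a ij.2 = 0 := by
      rintro ⟨i, j⟩ hij hnot
      rw [HasAntidiagonal.mem_antidiagonal] at hij
      rcases Nat.even_or_odd i with ⟨u, rfl⟩ | hi
      · refine absurd (mem_image.2 ⟨(u, k - u), HasAntidiagonal.mem_antidiagonal.2 (by omega),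
          ?_⟩) hnot
        simp only [double, Prod.mk.injEq]
        omega
      · rw [hodd i hi, zero_mul]
    rw [← sum_subset hsub hzero, sum_image hinj, show k + k + 2 = 2 * (k + 1) by ring, heven,
      catalan_succ']
    push_cast
    simp only [double, heven]
  · have hsum (ij : ℕ × ℕ) (hij : ij ∈ antidiagonal n) : a ij.1 * a ij.2 = 0 := by
      rw [HasAntidiagonal.mem_antidiagonal] at hij
      rcases Nat.even_or_odd ij.1 with hi | hi
      · rw [hodd ij.2 ((Nat.odd_add'.1 (hij ▸ hn)).2 hi), mul_zero]
      · rw [hodd ij.1 hi, zero_mul]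
    rw [sum_eq_zero hsum, hodd _ (hn.add_even even_two)]

theorem sum_range_mul_eq_of_catalan (heven : ∀ k, a (2 * k) = catalan k)
    (hodd : ∀ n, Odd n → a n = 0) (n : ℕ) :
    ∑ i ∈ range n, a i * a (n - 1 - i) = a (n + 1) := by
  cases n with
  | zero => simp [hodd 1 odd_one]
  | succ m =>
    simpa [Nat.sum_antidiagonal_eq_sum_range_succ (fun i j => a i * a j)] using
      sum_antidiagonal_mul_eq_of_catalan heven hodd m

end AeratedCatalan

theorem dividedDiff_eq_sum (p : ℝ[X]) (s t : ℝ) :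
    dividedDiff p s t = ∑ n ∈ range (p.natDegree + 1),
      p.coeff n * ∑ i ∈ range n, s ^ i * t ^ (n - 1 - i) := by
  rcases eq_or_ne s t with rfl | hst
  · rw [dividedDiff, if_pos rfl, derivative_eval, sum_over_range _ fun n => by simp]
    refine sum_congr rfl fun n _ => ?_
    rw [geom_sum₂_self]
    ring
  · rw [dividedDiff, if_neg hst, div_eq_iff (sub_ne_zero.2 hst), sum_mul, eval_eq_sum_range,
      eval_eq_sum_range, ← sum_sub_distrib]
    refine sum_congr rfl fun n _ => ?_
    rw [mul_assoc, geom_sum₂_mul, mul_sub]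

theorem integral_dividedDiff_prod {μ : Measure ℝ} [SFinite μ]
    (hμ : ∀ n : ℕ, Integrable (fun x => x ^ n) μ) (p : ℝ[X]) :
    ∫ q : ℝ × ℝ, dividedDiff p q.1 q.2 ∂μ.prod μ =
      ∑ n ∈ range (p.natDegree + 1), p.coeff n *
        ∑ i ∈ range n, (∫ x, x ^ i ∂μ) * ∫ x, x ^ (n - 1 - i) ∂μ := by
  have hint (i j : ℕ) : Integrable (fun q : ℝ × ℝ => q.1 ^ i * q.2 ^ j) (μ.prod μ) :=
    (hμ i).mul_prod (hμ j)
  simp_rw [dividedDiff_eq_sum]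
  rw [integral_finsetSum _ fun n _ => (integrable_finsetSum _ fun i _ => hint _ _).const_mul _]
  refine sum_congr rfl fun n _ => ?_
  rw [integral_const_mul, integral_finsetSum _ fun i _ => hint _ _]
  exact congrArg _ (sum_congr rfl fun i _ => integral_prod_mul _ _)

theorem integral_mul_eval {μ : Measure ℝ} (hμ : ∀ n : ℕ, Integrable (fun x => x ^ n) μ)
    (p : ℝ[X]) :
    ∫ s, s * p.eval s ∂μ = ∑ n ∈ range (p.natDegree + 1), p.coeff n * ∫ x, x ^ (n + 1) ∂μ := by
  simp_rw [eval_eq_sum_range, mul_sum, mul_left_comm _ (p.coeff _), ← pow_succ']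
  rw [integral_finsetSum _ fun n _ => (hμ _).const_mul _]
  simp_rw [integral_const_mul]

theorem intervalIntegral.integral_eq_zero_of_odd {f : ℝ → ℝ} (hf : ∀ x, f (-x) = -f x)
    (a : ℝ) : ∫ x in -a..a, f x = 0 := by
  have h := intervalIntegral.integral_comp_neg (a := -a) (b := a) f
  simp only [hf, intervalIntegral.integral_neg, neg_neg] at h
  linarith

theorem integral_sqrt_four_sub_sq : ∫ x in (-2 : ℝ)..2, √(4 - x ^ 2) = 2 * π := by
  have h (x : ℝ) : √(4 - x ^ 2) = 2 * √(1 - (x / 2) ^ 2) := by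
    rw [show (4 : ℝ) - x ^ 2 = 2 ^ 2 * (1 - (x / 2) ^ 2) by ring, sqrt_mul (by norm_num),
      sqrt_sq (by norm_num)]
  simp_rw [h]
  rw [intervalIntegral.integral_const_mul,
    intervalIntegral.integral_comp_div (fun u => √(1 - u ^ 2)) two_ne_zero]
  norm_num [integral_sqrt_one_sub_sq]
  ring

theorem hasDerivAt_four_sub_sq_mul_sqrt {x : ℝ} (hx : x ∈ Set.Ioo (-2 : ℝ) 2) :
    HasDerivAt (fun x => (4 - x ^ 2) * √(4 - x ^ 2)) (-3 * x * √(4 - x ^ 2)) x := by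
  have hpos : 0 < 4 - x ^ 2 := by nlinarith [hx.1, hx.2]
  have hw : HasDerivAt (fun x : ℝ => 4 - x ^ 2) (-(2 * x)) x := by
    simpa using (hasDerivAt_pow 2 x).const_sub 4
  refine (hw.fun_mul (hw.sqrt hpos.ne')).congr_deriv ?_
  field_simp
  rw [sq_sqrt hpos.le]
  ring

theorem integral_pow_add_two_mul_sqrt_four_sub_sq (n : ℕ) :
    (n + 4) * ∫ x in (-2 : ℝ)..2, x ^ (n + 2) * √(4 - x ^ 2) =
      4 * (n + 1) * ∫ x in (-2 : ℝ)..2, x ^ n * √(4 - x ^ 2) := by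
  have hderiv (x : ℝ) (hx : x ∈ Set.Ioo (-2 : ℝ) 2) :
      HasDerivAt (fun x => x ^ (n + 1) * ((4 - x ^ 2) * √(4 - x ^ 2)))
        (4 * (n + 1) * (x ^ n * √(4 - x ^ 2)) - (n + 4) * (x ^ (n + 2) * √(4 - x ^ 2))) x := by
    refine ((hasDerivAt_pow (n + 1) x).fun_mul
      (hasDerivAt_four_sub_sq_mul_sqrt hx)).congr_deriv ?_
    push_cast
    ring
  have hftc := intervalIntegral.integral_eq_sub_of_hasDerivAt_of_le (by norm_num)
    (by fun_prop) hderiv (Continuous.intervalIntegrable (by fun_prop) _ _)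
  rw [intervalIntegral.integral_sub, intervalIntegral.integral_const_mul,
    intervalIntegral.integral_const_mul] at hftc
  · norm_num at hftc
    linarith
  all_goals exact (Continuous.intervalIntegrable (by fun_prop) _ _).const_mul _

instance : IsFiniteMeasure semicircle :=
  isFiniteMeasure_withDensity_ofReal
    (by fun_prop : Continuous fun x : ℝ => 1 / (2 * π) * √(4 - x ^ 2)).integrableOn_Icc.2

theorem Continuous.integrable_semicircle {f : ℝ → ℝ} (hf : Continuous f) :
    Integrable f semicircle := by
  rw [semicircle, integrable_withDensity_iff_integrable_smul' (by fun_prop)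
    (ae_of_all _ fun _ => ENNReal.ofReal_lt_top)]
  simp only [ENNReal.toReal_ofReal', smul_eq_mul]
  exact Continuous.integrableOn_Icc (by fun_prop)

theorem integral_semicircle (f : ℝ → ℝ) :
    ∫ x, f x ∂semicircle = 1 / (2 * π) * ∫ x in -2..2, f x * √(4 - x ^ 2) := by
  rw [semicircle, integral_withDensity_eq_integral_toReal_smul (by fun_prop)
      (ae_of_all _ fun _ => ENNReal.ofReal_lt_top),
    intervalIntegral.integral_of_le (by norm_num), ← integral_Icc_eq_integral_Ioc,
    ← integral_const_mul]
  refine setIntegral_congr_fun measurableSet_Icc fun x _ => ?_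
  rw [ENNReal.toReal_ofReal (by positivity), smul_eq_mul]
  ring

theorem integral_pow_semicircle_of_odd {n : ℕ} (hn : Odd n) : ∫ x, x ^ n ∂semicircle = 0 := by
  rw [integral_semicircle, intervalIntegral.integral_eq_zero_of_odd
    (fun x => by rw [hn.neg_pow, neg_sq, neg_mul]), mul_zero]

theorem integral_pow_semicircle_add_two (n : ℕ) :
    (n + 4) * ∫ x, x ^ (n + 2) ∂semicircle = 4 * (n + 1) * ∫ x, x ^ n ∂semicircle := by
  rw [integral_semicircle, integral_semicircle, mul_left_comm,
    integral_pow_add_two_mul_sqrt_four_sub_sq]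
  ring

theorem integral_pow_semicircle_two_mul (k : ℕ) : ∫ x, x ^ (2 * k) ∂semicircle = catalan k := by
  induction k with
  | zero =>
    simp only [mul_zero, pow_zero, catalan_zero, Nat.cast_one, integral_semicircle, one_mul,
      integral_sqrt_four_sub_sq]
    field_simp
  | succ k ih =>
    have hrec := integral_pow_semicircle_add_two (2 * k)
    have hcat : ((k : ℝ) + 2) * catalan (k + 1) = 2 * (2 * k + 1) * catalan k := by
      exact_mod_cast add_two_mul_catalan_succ k
    rw [ih, show 2 * k + 2 = 2 * (k + 1) by ring] at hrec
    push_cast at hrec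
    apply mul_left_cancel₀ (show (2 * k + 4 : ℝ) ≠ 0 by positivity)
    linear_combination hrec - 2 * hcat

theorem stmt_15 (p : Polynomial ℝ) :
    ∫ q : ℝ × ℝ, dividedDiff p q.1 q.2 ∂(semicircle.prod semicircle) =
      ∫ s, s * p.eval s ∂semicircle := by
  have hμ (n : ℕ) : Integrable (fun x : ℝ => x ^ n) semicircle :=
    (continuous_pow n).integrable_semicircle
  rw [integral_dividedDiff_prod hμ, integral_mul_eval hμ]
  refine sum_congr rfl fun n _ => ?_
  rw [sum_range_mul_eq_of_catalan (a := fun n => ∫ x, x ^ n ∂semicircle)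
    integral_pow_semicircle_two_mul fun _ => integral_pow_semicircle_of_odd]
end

section
/- The function ρ(x) = (1/π)·log|(1 + √(1 - x²))/x| on (-1, 1) \ {0} (extended by 0 elsewhere) is a probability density: it is nonnegative on (-1,1) and ∫_{-1}^{1} ρ(x) dx = 1. -/
open MeasureTheory

/-- Density of the free Gibbs measure for the potential |x|/2. -/
noncomputable def gibbsAbsDensity (x : ℝ) : ℝ :=
  if x ∈ Set.Ioo (-1 : ℝ) 1 ∧ x ≠ 0 then
    (1 / Real.pi) * Real.log |(1 + Real.sqrt (1 - x ^ 2)) / x|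
  else 0

/-!
On `(0, 1)` the density is `arsech x / π`, since `log ((1 + √(1 - x²)) / x) = arsech x`, and
`x · arsech x + arcsin x` is a primitive of `arsech` that is continuous on `[0, 1]`, vanishes at `0`
and equals `π / 2` at `1`. Hence `∫₀¹ ρ = 1 / 2`, and `ρ` is even.
-/

open Real Set intervalIntegral

theorem integral_symm_eq_two_smul_of_even {E : Type*} [NormedAddCommGroup E]
    [NormedSpace ℝ E] {f : ℝ → E} (hf : ∀ x, f (-x) = f x) {a : ℝ}
    (hi : IntervalIntegrable f volume 0 a) :
    ∫ x in -a..a, f x = (2 : ℝ) • ∫ x in 0..a, f x := by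
  have hf' : (fun x ↦ f (-x)) = f := funext hf
  have hi_neg : IntervalIntegrable f volume (-a) 0 := by
    simpa [hf'] using (IntervalIntegrable.iff_comp_neg (f := f)).mp hi.symm
  have h_neg : ∫ x in -a..0, f x = ∫ x in 0..a, f x := by
    simpa [hf'] using integral_comp_neg (a := -a) (b := 0) (f := f)
  rw [← integral_add_adjacent_intervals hi_neg hi, h_neg, two_smul]

theorem gibbsAbsDensity_neg (x : ℝ) : gibbsAbsDensity (-x) = gibbsAbsDensity x := by
  have hmem : -x ∈ Ioo (-1 : ℝ) 1 ∧ -x ≠ 0 ↔ x ∈ Ioo (-1 : ℝ) 1 ∧ x ≠ 0 := by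
    simp only [mem_Ioo, ne_eq, neg_eq_zero]
    constructor <;> rintro ⟨⟨h₁, h₂⟩, h₃⟩ <;> exact ⟨⟨by linarith, by linarith⟩, h₃⟩
  simp only [gibbsAbsDensity, hmem, neg_sq, div_neg, abs_neg]

theorem gibbsAbsDensity_nonneg (x : ℝ) : 0 ≤ gibbsAbsDensity x := by
  unfold gibbsAbsDensity
  split_ifs with h
  · obtain ⟨⟨h₁, h₂⟩, hx⟩ := h
    have hx_lt : |x| < 1 := abs_lt.mpr ⟨h₁, h₂⟩
    refine mul_nonneg (by positivity) (log_nonneg ?_)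
    rw [abs_div, one_le_div (abs_pos.mpr hx)]
    exact (hx_lt.trans_le ((le_add_of_nonneg_right (sqrt_nonneg _)).trans (le_abs_self _))).le
  · exact le_rfl

theorem gibbsAbsDensity_eq_of_mem_Ioo {x : ℝ} (hx : x ∈ Ioo (0 : ℝ) 1) :
    gibbsAbsDensity x = (1 / π) * (log (1 + √(1 - x ^ 2)) - log x) := by
  obtain ⟨hx₀, hx₁⟩ := hx
  have hs : 0 < 1 + √(1 - x ^ 2) := by positivity
  rw [gibbsAbsDensity, if_pos ⟨⟨by linarith, hx₁⟩, hx₀.ne'⟩, abs_of_pos (div_pos hs hx₀),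
    log_div hs.ne' hx₀.ne']

theorem continuous_log_one_add_sqrt_one_sub_sq :
    Continuous fun x : ℝ ↦ log (1 + √(1 - x ^ 2)) :=
  (continuous_const.add (continuous_const.sub (continuous_pow 2)).sqrt).log
    fun x ↦ (by positivity : (0 : ℝ) < 1 + √(1 - x ^ 2)).ne'

theorem hasDerivAt_log_one_add_sqrt_one_sub_sq {x : ℝ} (hx : x ^ 2 < 1) :
    HasDerivAt (fun y ↦ log (1 + √(1 - y ^ 2)))
      (-x / (√(1 - x ^ 2) * (1 + √(1 - x ^ 2)))) x := by
  have hpos : 0 < 1 - x ^ 2 := by linarith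
  have hsq : HasDerivAt (fun y : ℝ ↦ 1 - y ^ 2) (-(2 * x)) x := by
    simpa using (hasDerivAt_pow 2 x).const_sub 1
  convert ((hsq.sqrt hpos.ne').const_add 1).log (by positivity) using 1
  field_simp

/-- `x · arsech x + arcsin x`, written so that it is visibly continuous at `0`. -/
noncomputable def arsechPrimitive (x : ℝ) : ℝ :=
  x * log (1 + √(1 - x ^ 2)) - x * log x + arcsin x

theorem continuous_arsechPrimitive : Continuous arsechPrimitive :=
  ((continuous_id.mul continuous_log_one_add_sqrt_one_sub_sq).sub continuous_mul_log).add
    continuous_arcsin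

theorem hasDerivAt_arsechPrimitive {x : ℝ} (hx : x ∈ Ioo (0 : ℝ) 1) :
    HasDerivAt arsechPrimitive (log (1 + √(1 - x ^ 2)) - log x) x := by
  obtain ⟨hx₀, hx₁⟩ := hx
  have hx_sq : x ^ 2 < 1 := by nlinarith
  have h : HasDerivAt arsechPrimitive
      (1 * log (1 + √(1 - x ^ 2)) + x * (-x / (√(1 - x ^ 2) * (1 + √(1 - x ^ 2))))
        - (log x + 1) + 1 / √(1 - x ^ 2)) x :=
    (((hasDerivAt_id' x).mul (hasDerivAt_log_one_add_sqrt_one_sub_sq hx_sq)).sub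
      (hasDerivAt_mul_log hx₀.ne')).add (hasDerivAt_arcsin (by linarith) hx₁.ne)
  convert h using 1
  have hs : 0 < √(1 - x ^ 2) := sqrt_pos.mpr (by linarith)
  field_simp
  linear_combination sq_sqrt (by linarith : 0 ≤ 1 - x ^ 2)

theorem integral_log_one_add_sqrt_one_sub_sq_sub_log :
    ∫ x in (0 : ℝ)..1, (log (1 + √(1 - x ^ 2)) - log x) = π / 2 := by
  rw [integral_eq_sub_of_hasDerivAt_of_le zero_le_one continuous_arsechPrimitive.continuousOn
    (fun x hx ↦ hasDerivAt_arsechPrimitive hx)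
    (continuous_log_one_add_sqrt_one_sub_sq.intervalIntegrable 0 1 |>.sub intervalIntegrable_log')]
  simp [arsechPrimitive]

theorem eqOn_gibbsAbsDensity :
    EqOn (fun x ↦ (1 / π) * (log (1 + √(1 - x ^ 2)) - log x)) gibbsAbsDensity (uIoo 0 1) := by
  rw [uIoo_of_le zero_le_one]
  exact fun x hx ↦ (gibbsAbsDensity_eq_of_mem_Ioo hx).symm

theorem intervalIntegrable_gibbsAbsDensity : IntervalIntegrable gibbsAbsDensity volume 0 1 :=
  ((continuous_log_one_add_sqrt_one_sub_sq.intervalIntegrable 0 1).sub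
    intervalIntegrable_log').const_mul _ |>.congr_uIoo eqOn_gibbsAbsDensity

theorem integral_gibbsAbsDensity_zero_one : ∫ x in (0 : ℝ)..1, gibbsAbsDensity x = 1 / 2 := by
  rw [← integral_congr_uIoo eqOn_gibbsAbsDensity, intervalIntegral.integral_const_mul,
    integral_log_one_add_sqrt_one_sub_sq_sub_log]
  field_simp [pi_ne_zero]

theorem stmt_16 :
    (∀ x ∈ Set.Ioo (-1 : ℝ) 1, 0 ≤ gibbsAbsDensity x) ∧
      ∫ x in Set.Ioo (-1 : ℝ) 1, gibbsAbsDensity x = 1 := by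
  refine ⟨fun x _ ↦ gibbsAbsDensity_nonneg x, ?_⟩
  rw [← integral_Ioc_eq_integral_Ioo, ← integral_of_le (by norm_num),
    integral_symm_eq_two_smul_of_even gibbsAbsDensity_neg
      intervalIntegrable_gibbsAbsDensity, integral_gibbsAbsDensity_zero_one]
  norm_num
end
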